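/- Let θ ∈ [α/2, α] with θ > 0, fix ε ∈ (0,1), let m be a nonnegative integer, and let v₀, v₁ ∈ L¹(ℝⁿ). Then there exists C > 0 (depending only on n, m, δ, α, θ, ε) such that for all t ≥ 0, ( ∫_{{ξ : 0 < |ξ| < ε}} |ξ|^{2m} |∂ₜv̂(t,ξ)|² dξ )^{1/2} ≤ C·( ‖v₀‖_{L¹}·(1+t)^{−(n/4+m/2+α/2)/θ} + ‖v₁‖_{L¹}·(1+t)^{−(n/4+m/2)/θ} ). -/

import Mathlib

open MeasureTheory FourierTransform

/-- The eigenvalue `λ₊(ξ)`, with the principal complex square root. -/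
noncomputable def lamP (n : ℕ) (δ α θ : ℝ) (ξ : EuclideanSpace ℝ (Fin n)) : ℂ :=
  ((‖ξ‖ ^ (2 * θ) / (2 * (1 + ‖ξ‖ ^ (2 * δ))) : ℝ) : ℂ) *
    (-1 + ((1 - 4 * ‖ξ‖ ^ (2 * (α - 2 * θ)) * (1 + ‖ξ‖ ^ (2 * δ)) : ℝ) : ℂ) ^ (1 / 2 : ℂ))

/-- The eigenvalue `λ₋(ξ)`, with the principal complex square root. -/
noncomputable def lamM (n : ℕ) (δ α θ : ℝ) (ξ : EuclideanSpace ℝ (Fin n)) : ℂ :=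
  ((‖ξ‖ ^ (2 * θ) / (2 * (1 + ‖ξ‖ ^ (2 * δ))) : ℝ) : ℂ) *
    (-1 - ((1 - 4 * ‖ξ‖ ^ (2 * (α - 2 * θ)) * (1 + ‖ξ‖ ^ (2 * δ)) : ℝ) : ℂ) ^ (1 / 2 : ℂ))

/-- The Fourier transform `v̂(t,ξ) = K̂₀(t,ξ) v̂₀(ξ) + K̂₁(t,ξ) v̂₁(ξ)` of the solution. -/
noncomputable def vhat (n : ℕ) (δ α θ : ℝ) (v0 v1 : EuclideanSpace ℝ (Fin n) → ℂ)
    (t : ℝ) (ξ : EuclideanSpace ℝ (Fin n)) : ℂ :=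
  (lamP n δ α θ ξ * Complex.exp (lamM n δ α θ ξ * t)
      - lamM n δ α θ ξ * Complex.exp (lamP n δ α θ ξ * t)) /
      (lamP n δ α θ ξ - lamM n δ α θ ξ) * FourierTransform.fourier v0 ξ
    + (Complex.exp (lamP n δ α θ ξ * t) - Complex.exp (lamM n δ α θ ξ * t)) /
      (lamP n δ α θ ξ - lamM n δ α θ ξ) * FourierTransform.fourier v1 ξ

/-- The time derivative `∂ₜv̂(t,ξ) = ∂ₜK̂₀(t,ξ) v̂₀(ξ) + ∂ₜK̂₁(t,ξ) v̂₁(ξ)`. -/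
noncomputable def dtvhat (n : ℕ) (δ α θ : ℝ) (v0 v1 : EuclideanSpace ℝ (Fin n) → ℂ)
    (t : ℝ) (ξ : EuclideanSpace ℝ (Fin n)) : ℂ :=
  lamP n δ α θ ξ * lamM n δ α θ ξ *
      (Complex.exp (lamM n δ α θ ξ * t) - Complex.exp (lamP n δ α θ ξ * t)) /
      (lamP n δ α θ ξ - lamM n δ α θ ξ) * FourierTransform.fourier v0 ξ
    + (lamP n δ α θ ξ * Complex.exp (lamP n δ α θ ξ * t)
        - lamM n δ α θ ξ * Complex.exp (lamM n δ α θ ξ * t)) /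
      (lamP n δ α θ ξ - lamM n δ α θ ξ) * FourierTransform.fourier v1 ξ

/-!
For `0 < ‖ξ‖ < 1` and `α ≤ 2θ` the discriminant `1 - 4‖ξ‖^{2(α-2θ)}(1+‖ξ‖^{2δ})` is negative,
so `λ± = ρ(-1 ± i s)` is a conjugate pair with `ρ = ‖ξ‖^{2θ}/(2(1+‖ξ‖^{2δ})) ≥ ‖ξ‖^{2θ}/4`.
Then `|∂ₜK̂₀| ≤ 2‖ξ‖^α e^{-ρt}` and `|∂ₜK̂₁| ≤ 2e^{-ρt}`, and `|v̂ⱼ| ≤ ‖vⱼ‖_{L¹}`.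
Since `‖ξ‖^{2θ} ≤ 1`, the factor `e^{-‖ξ‖^{2θ}t/2}` is at most `e^{1/2} e^{-(1+t)‖ξ‖^{2θ}/2}`,
which is integrable over all of `ℝⁿ` against `‖ξ‖^q`; the substitution `ξ ↦ (1+t)^{1/(2θ)} ξ`
shows that this integral is exactly `(1+t)^{-(n+q)/(2θ)}` times its value at `t = 0`.
-/

open Real

lemma ofReal_cpow_half_of_neg {w : ℝ} (hw : w < 0) :
    (w : ℂ) ^ (1 / 2 : ℂ) = √(-w) * Complex.I := by
  have hsqrt : ((-w : ℝ) : ℂ) ^ (1 / 2 : ℂ) = √(-w) := by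
    rw [Real.sqrt_eq_rpow, Complex.ofReal_cpow (by linarith)]
    norm_num
  have hexp : Complex.exp (π * Complex.I * (1 / 2 : ℂ)) = Complex.I := by
    rw [show (π : ℂ) * Complex.I * (1 / 2) = (π / 2 : ℝ) * Complex.I by push_cast; ring,
      Complex.exp_mul_I, ← Complex.ofReal_cos, ← Complex.ofReal_sin]
    simp
  rw [Complex.ofReal_cpow_of_nonpos hw.le, ← hsqrt, hexp]
  push_cast
  rfl

section ConjugatePair

variable {ρ s : ℝ} {lp lm : ℂ}

lemma norm_ofReal_mul_neg_one_add_mul_I (hρ : 0 ≤ ρ) (s : ℝ) :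
    ‖(ρ : ℂ) * (-1 + s * Complex.I)‖ = ρ * √(1 + s ^ 2) := by
  rw [norm_mul, Complex.norm_real, Real.norm_of_nonneg hρ, ← Complex.ofReal_one,
    ← Complex.ofReal_neg, Complex.norm_add_mul_I]
  norm_num

lemma norm_cexp_ofReal_mul_neg_one_add_mul_I (ρ s t : ℝ) :
    ‖Complex.exp ((ρ : ℂ) * (-1 + s * Complex.I) * t)‖ = rexp (-(ρ * t)) := by
  rw [Complex.norm_exp]
  simp

lemma neg_one_sub_mul_I (s : ℝ) : -1 - s * Complex.I = -1 + ((-s : ℝ) : ℂ) * Complex.I := by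
  push_cast; ring

lemma norm_of_conj_pair (hρ : 0 < ρ)
    (hp : lp = ρ * (-1 + s * Complex.I)) (hm : lm = ρ * (-1 - s * Complex.I)) :
    ‖lp‖ = ρ * √(1 + s ^ 2) ∧ ‖lm‖ = ρ * √(1 + s ^ 2) := by
  rw [hp, hm, neg_one_sub_mul_I, norm_ofReal_mul_neg_one_add_mul_I hρ.le,
    norm_ofReal_mul_neg_one_add_mul_I hρ.le, neg_sq]
  exact ⟨rfl, rfl⟩

lemma norm_cexp_of_conj_pair (t : ℝ)
    (hp : lp = ρ * (-1 + s * Complex.I)) (hm : lm = ρ * (-1 - s * Complex.I)) :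
    ‖Complex.exp (lp * t)‖ = rexp (-(ρ * t)) ∧ ‖Complex.exp (lm * t)‖ = rexp (-(ρ * t)) := by
  rw [hp, hm, neg_one_sub_mul_I]
  exact ⟨norm_cexp_ofReal_mul_neg_one_add_mul_I .., norm_cexp_ofReal_mul_neg_one_add_mul_I ..⟩

lemma norm_sub_of_conj_pair (hρ : 0 < ρ) (hs : 0 < s)
    (hp : lp = ρ * (-1 + s * Complex.I)) (hm : lm = ρ * (-1 - s * Complex.I)) :
    ‖lp - lm‖ = 2 * ρ * s := by
  rw [hp, hm, show (ρ : ℂ) * (-1 + s * Complex.I) - ρ * (-1 - s * Complex.I)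
      = ((2 * ρ * s : ℝ) : ℂ) * Complex.I by push_cast; ring,
    norm_mul, Complex.norm_I, mul_one, Complex.norm_real, Real.norm_of_nonneg (by positivity)]

lemma norm_dtK0_le_of_conj_pair (hρ : 0 < ρ) (hs : 0 < s) (t : ℝ)
    (hp : lp = ρ * (-1 + s * Complex.I)) (hm : lm = ρ * (-1 - s * Complex.I)) :
    ‖lp * lm * (Complex.exp (lm * t) - Complex.exp (lp * t)) / (lp - lm)‖
      ≤ ρ * (1 + s ^ 2) / s * rexp (-(ρ * t)) := by
  obtain ⟨hlp, hlm⟩ := norm_of_conj_pair hρ hp hm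
  obtain ⟨hep, hem⟩ := norm_cexp_of_conj_pair t hp hm
  have hexp : ‖Complex.exp (lm * t) - Complex.exp (lp * t)‖ ≤ 2 * rexp (-(ρ * t)) :=
    (norm_sub_le _ _).trans_eq (by rw [hep, hem]; ring)
  rw [norm_div, norm_mul, norm_mul, hlp, hlm, norm_sub_of_conj_pair hρ hs hp hm]
  calc ρ * √(1 + s ^ 2) * (ρ * √(1 + s ^ 2)) * ‖Complex.exp (lm * t) - Complex.exp (lp * t)‖
        / (2 * ρ * s)
      ≤ ρ * √(1 + s ^ 2) * (ρ * √(1 + s ^ 2)) * (2 * rexp (-(ρ * t))) / (2 * ρ * s) := by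
        gcongr
    _ = ρ * (1 + s ^ 2) / s * rexp (-(ρ * t)) := by
        field_simp
        rw [Real.sq_sqrt (by positivity)]

lemma norm_dtK1_le_of_conj_pair (hρ : 0 < ρ) (hs : 0 < s) (t : ℝ)
    (hp : lp = ρ * (-1 + s * Complex.I)) (hm : lm = ρ * (-1 - s * Complex.I)) :
    ‖(lp * Complex.exp (lp * t) - lm * Complex.exp (lm * t)) / (lp - lm)‖
      ≤ √(1 + s ^ 2) / s * rexp (-(ρ * t)) := by
  obtain ⟨hlp, hlm⟩ := norm_of_conj_pair hρ hp hm
  obtain ⟨hep, hem⟩ := norm_cexp_of_conj_pair t hp hm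
  have hnum : ‖lp * Complex.exp (lp * t) - lm * Complex.exp (lm * t)‖
      ≤ 2 * ρ * √(1 + s ^ 2) * rexp (-(ρ * t)) :=
    (norm_sub_le _ _).trans_eq (by rw [norm_mul, norm_mul, hlp, hlm, hep, hem]; ring)
  rw [norm_div, norm_sub_of_conj_pair hρ hs hp hm]
  calc ‖lp * Complex.exp (lp * t) - lm * Complex.exp (lm * t)‖ / (2 * ρ * s)
      ≤ 2 * ρ * √(1 + s ^ 2) * rexp (-(ρ * t)) / (2 * ρ * s) := by gcongr
    _ = √(1 + s ^ 2) / s * rexp (-(ρ * t)) := by field_simp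

end ConjugatePair

section LowFrequency

variable {x y : ℝ}

lemma sq_sqrt_discr (hx : 1 ≤ x) (hy : 0 ≤ y) : √(4 * x * (1 + y) - 1) ^ 2 = 4 * x * (1 + y) - 1 :=
  Real.sq_sqrt (by nlinarith)

lemma sqrt_le_sqrt_discr (hx : 1 ≤ x) (hy : 0 ≤ y) : √x ≤ √(4 * x * (1 + y) - 1) :=
  Real.sqrt_le_sqrt (by nlinarith)

lemma dtK0_coeff_le (hx : 1 ≤ x) (hy : 0 ≤ y) {R : ℝ} (hR : 0 ≤ R) :
    R / (2 * (1 + y)) * (1 + √(4 * x * (1 + y) - 1) ^ 2) / √(4 * x * (1 + y) - 1)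
      ≤ 2 * R * √x := by
  set s := √(4 * x * (1 + y) - 1)
  have hsx := sqrt_le_sqrt_discr hx hy
  have hx0 : 0 < √x := Real.sqrt_pos.mpr (by linarith)
  rw [sq_sqrt_discr hx hy, div_le_iff₀ (hx0.trans_le hsx)]
  -- `ρ (1 + s²) = 2 R x`, and `x = √x · √x ≤ √x · s`
  calc R / (2 * (1 + y)) * (1 + (4 * x * (1 + y) - 1)) = 2 * R * (√x * √x) := by
        rw [Real.mul_self_sqrt (by linarith)]
        field_simp
        ring
    _ ≤ 2 * R * √x * s := by rw [← mul_assoc]; gcongr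

lemma dtK1_coeff_le (hx : 1 ≤ x) (hy : 0 ≤ y) :
    √(1 + √(4 * x * (1 + y) - 1) ^ 2) / √(4 * x * (1 + y) - 1) ≤ 2 := by
  have hs2 := sq_sqrt_discr hx hy
  have hs : 0 < √(4 * x * (1 + y) - 1) := by
    apply Real.sqrt_pos.mpr
    nlinarith
  rw [div_le_iff₀ hs, Real.sqrt_le_left (by positivity)]
  nlinarith

end LowFrequency

section Symbol

variable {n : ℕ} {δ α θ : ℝ} {ξ : EuclideanSpace ℝ (Fin n)}

lemma discriminant_neg (hαθ : α ≤ 2 * θ) (hξ0 : 0 < ‖ξ‖) (hξ1 : ‖ξ‖ < 1) :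
    1 - 4 * ‖ξ‖ ^ (2 * (α - 2 * θ)) * (1 + ‖ξ‖ ^ (2 * δ)) < 0 := by
  have hx : 1 ≤ ‖ξ‖ ^ (2 * (α - 2 * θ)) :=
    Real.one_le_rpow_of_pos_of_le_one_of_nonpos hξ0 hξ1.le (by linarith)
  have hy : 0 < ‖ξ‖ ^ (2 * δ) := Real.rpow_pos_of_pos hξ0 _
  nlinarith

lemma lamP_eq_of_discriminant_neg (hw : 1 - 4 * ‖ξ‖ ^ (2 * (α - 2 * θ)) * (1 + ‖ξ‖ ^ (2 * δ)) < 0) :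
    lamP n δ α θ ξ = (‖ξ‖ ^ (2 * θ) / (2 * (1 + ‖ξ‖ ^ (2 * δ))) : ℝ) *
      (-1 + √(4 * ‖ξ‖ ^ (2 * (α - 2 * θ)) * (1 + ‖ξ‖ ^ (2 * δ)) - 1) * Complex.I) := by
  rw [lamP, ofReal_cpow_half_of_neg hw, neg_sub]

lemma lamM_eq_of_discriminant_neg (hw : 1 - 4 * ‖ξ‖ ^ (2 * (α - 2 * θ)) * (1 + ‖ξ‖ ^ (2 * δ)) < 0) :
    lamM n δ α θ ξ = (‖ξ‖ ^ (2 * θ) / (2 * (1 + ‖ξ‖ ^ (2 * δ))) : ℝ) *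
      (-1 - √(4 * ‖ξ‖ ^ (2 * (α - 2 * θ)) * (1 + ‖ξ‖ ^ (2 * δ)) - 1) * Complex.I) := by
  rw [lamM, ofReal_cpow_half_of_neg hw, neg_sub]

lemma norm_dtvhat_le (hδ : 0 ≤ δ) (hαθ : α ≤ 2 * θ) (v0 v1 : EuclideanSpace ℝ (Fin n) → ℂ)
    {t : ℝ} (ht : 0 ≤ t) (hξ0 : 0 < ‖ξ‖) (hξ1 : ‖ξ‖ < 1) :
    ‖dtvhat n δ α θ v0 v1 t ξ‖ ≤
      2 * rexp (-(‖ξ‖ ^ (2 * θ) * t / 4)) * (‖ξ‖ ^ α * ‖𝓕 v0 ξ‖ + ‖𝓕 v1 ξ‖) := by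
  have hw := discriminant_neg (δ := δ) hαθ hξ0 hξ1
  have hP := lamP_eq_of_discriminant_neg hw
  have hM := lamM_eq_of_discriminant_neg hw
  set r := ‖ξ‖
  set R := r ^ (2 * θ)
  set x := r ^ (2 * (α - 2 * θ))
  set y := r ^ (2 * δ)
  set ρ := R / (2 * (1 + y))
  set s := √(4 * x * (1 + y) - 1)
  have hx : 1 ≤ x := Real.one_le_rpow_of_pos_of_le_one_of_nonpos hξ0 hξ1.le (by linarith)
  have hy0 : 0 ≤ y := Real.rpow_nonneg hξ0.le _
  have hy1 : y ≤ 1 := Real.rpow_le_one hξ0.le hξ1.le (by positivity)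
  have hR : 0 < R := Real.rpow_pos_of_pos hξ0 _
  have hρ : 0 < ρ := by positivity
  have hs : 0 < s := Real.sqrt_pos.mpr (by nlinarith)
  have hRx : R * √x = r ^ α := by
    rw [Real.sqrt_eq_rpow, ← Real.rpow_mul hξ0.le, ← Real.rpow_add hξ0]
    ring_nf
  have hρR : R / 4 ≤ ρ := by
    rw [div_le_div_iff₀ (by norm_num) (by positivity)]
    nlinarith
  have hdamp : rexp (-(ρ * t)) ≤ rexp (-(R * t / 4)) := by
    have := mul_le_mul_of_nonneg_right hρR ht
    gcongr
    linarith
  rw [dtvhat]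
  refine (norm_add_le _ _).trans ?_
  rw [norm_mul, norm_mul]
  calc _ ≤ ρ * (1 + s ^ 2) / s * rexp (-(ρ * t)) * ‖𝓕 v0 ξ‖
        + √(1 + s ^ 2) / s * rexp (-(ρ * t)) * ‖𝓕 v1 ξ‖ := by
        gcongr
        · exact norm_dtK0_le_of_conj_pair hρ hs t hP hM
        · exact norm_dtK1_le_of_conj_pair hρ hs t hP hM
    _ ≤ 2 * R * √x * rexp (-(R * t / 4)) * ‖𝓕 v0 ξ‖ + 2 * rexp (-(R * t / 4)) * ‖𝓕 v1 ξ‖ := by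
        gcongr
        · exact dtK0_coeff_le hx hy0 hR.le
        · exact dtK1_coeff_le hx hy0
    _ = 2 * rexp (-(R * t / 4)) * (r ^ α * ‖𝓕 v0 ξ‖ + ‖𝓕 v1 ξ‖) := by
        rw [← hRx]
        ring

end Symbol

section RadialWeight

open Module

variable {E : Type*} [NormedAddCommGroup E] [NormedSpace ℝ E] [MeasurableSpace E] [BorelSpace E]
  [FiniteDimensional ℝ E] (μ : Measure E) [μ.IsAddHaarMeasure]

lemma integrable_norm_rpow_mul_exp_neg_mul_norm_rpow [Nontrivial E] {p q c : ℝ}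
    (hq : -(finrank ℝ E : ℝ) < q) (hp : 0 < p) (hc : 0 < c) :
    Integrable (fun x : E => ‖x‖ ^ q * rexp (-(c * ‖x‖ ^ p))) μ := by
  have hd : 0 < finrank ℝ E := finrank_pos
  rw [integrable_fun_norm_addHaar μ (f := fun y => y ^ q * rexp (-(c * y ^ p)))]
  refine (integrableOn_rpow_mul_exp_neg_mul_rpow (s := (finrank ℝ E - 1 : ℝ) + q)
    (by linarith) hp hc).congr_fun (fun y hy => ?_) measurableSet_Ioi
  dsimp only
  rw [smul_eq_mul, Real.rpow_add hy, ← Nat.cast_pred hd, Real.rpow_natCast, neg_mul, mul_assoc]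

lemma integral_norm_rpow_mul_exp_neg_mul_mul_norm_rpow {p c : ℝ} (hp : 0 < p) (hc : 0 < c)
    (q a : ℝ) :
    ∫ x, ‖x‖ ^ q * rexp (-(c * a * ‖x‖ ^ p)) ∂μ
      = c ^ (-(finrank ℝ E + q) / p) * ∫ x, ‖x‖ ^ q * rexp (-(a * ‖x‖ ^ p)) ∂μ := by
  set R := c ^ (1 / p)
  have hR : 0 < R := Real.rpow_pos_of_pos hc _
  have hRpow (u : ℝ) : R ^ u = c ^ (u / p) := by
    rw [← Real.rpow_mul hc.le]
    ring_nf
  have hscale (x : E) : ‖R • x‖ ^ q * rexp (-(a * ‖R • x‖ ^ p))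
      = c ^ (q / p) * (‖x‖ ^ q * rexp (-(c * a * ‖x‖ ^ p))) := by
    rw [norm_smul, Real.norm_of_nonneg hR.le, Real.mul_rpow hR.le (norm_nonneg x),
      Real.mul_rpow hR.le (norm_nonneg x), hRpow, hRpow, div_self hp.ne', Real.rpow_one]
    ring_nf
  have key := Measure.integral_comp_smul_of_nonneg μ
    (fun x : E => ‖x‖ ^ q * rexp (-(a * ‖x‖ ^ p))) R (hR := hR.le)
  simp only [hscale, integral_const_mul, smul_eq_mul] at key
  rw [← Real.rpow_natCast, hRpow] at key
  rw [neg_div, add_div, neg_add, Real.rpow_add hc, Real.rpow_neg hc.le, Real.rpow_neg hc.le,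
    mul_assoc, mul_left_comm, ← key, ← mul_assoc, inv_mul_cancel₀ (Real.rpow_pos_of_pos hc _).ne',
    one_mul]

end RadialWeight

lemma rpow_eq_sq_rpow {x a b : ℝ} (hx : 0 ≤ x) (h : a = 2 * b) : x ^ a = (x ^ b) ^ 2 := by
  rw [h, mul_comm, Real.rpow_mul hx, Real.rpow_two]

lemma sq_mul_add_sq_mul_le {a b c d : ℝ} (ha : 0 ≤ a) (hb : 0 ≤ b) (hc : 0 ≤ c) (hd : 0 ≤ d) :
    a ^ 2 * c + b ^ 2 * d ≤ (c + d) * (a + b) ^ 2 := by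
  nlinarith [mul_nonneg (mul_nonneg ha hb) (add_nonneg hc hd), mul_nonneg (sq_nonneg a) hd,
    mul_nonneg (sq_nonneg b) hc]

section Estimate

variable {n : ℕ} {δ α θ ε : ℝ}

noncomputable def stretchedExpMoment (n : ℕ) (θ q : ℝ) : ℝ :=
  ∫ x : EuclideanSpace ℝ (Fin n), ‖x‖ ^ q * rexp (-(1 / 2 * ‖x‖ ^ (2 * θ)))

lemma stretchedExpMoment_nonneg (n : ℕ) (θ q : ℝ) : 0 ≤ stretchedExpMoment n θ q :=
  integral_nonneg fun x => by positivity

lemma sq_norm_dtvhat_le (hδ : 0 ≤ δ) (hαθ : α ≤ 2 * θ) (hθ : 0 ≤ θ) (m : ℕ)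
    (v0 v1 : EuclideanSpace ℝ (Fin n) → ℂ) {t : ℝ} (ht : 0 ≤ t)
    {ξ : EuclideanSpace ℝ (Fin n)} (hξ0 : 0 < ‖ξ‖) (hξ1 : ‖ξ‖ < 1) :
    ‖ξ‖ ^ (2 * m) * ‖dtvhat n δ α θ v0 v1 t ξ‖ ^ 2
      ≤ 8 * rexp (1 / 2) *
        ((∫ x, ‖v0 x‖) ^ 2 * (‖ξ‖ ^ (2 * (m + α)) * rexp (-((1 + t) * (1 / 2) * ‖ξ‖ ^ (2 * θ))))
          + (∫ x, ‖v1 x‖) ^ 2 * (‖ξ‖ ^ (2 * (m : ℝ)) *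
            rexp (-((1 + t) * (1 / 2) * ‖ξ‖ ^ (2 * θ))))) := by
  set r := ‖ξ‖
  set A := ∫ x, ‖v0 x‖
  set B := ∫ x, ‖v1 x‖
  have hA : 0 ≤ A := integral_nonneg fun x => norm_nonneg (v0 x)
  have hB : 0 ≤ B := integral_nonneg fun x => norm_nonneg (v1 x)
  have hR : r ^ (2 * θ) ≤ 1 := Real.rpow_le_one hξ0.le hξ1.le (by positivity)
  have hD : ‖dtvhat n δ α θ v0 v1 t ξ‖ ≤ 2 * rexp (-(r ^ (2 * θ) * t / 4)) * (r ^ α * A + B) := by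
    refine (norm_dtvhat_le hδ hαθ v0 v1 ht hξ0 hξ1).trans ?_
    gcongr
    · exact VectorFourier.norm_fourierIntegral_le_integral_norm ..
    · exact VectorFourier.norm_fourierIntegral_le_integral_norm ..
  have hE : rexp (-(r ^ (2 * θ) * t / 4)) ^ 2
      ≤ rexp (1 / 2) * rexp (-((1 + t) * (1 / 2) * r ^ (2 * θ))) := by
    rw [← Real.exp_nat_mul, ← Real.exp_add]
    gcongr
    linarith
  have hcross : (r ^ α * A + B) ^ 2 ≤ 2 * ((r ^ α) ^ 2 * A ^ 2 + B ^ 2) := by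
    nlinarith [sq_nonneg (r ^ α * A - B)]
  have hpow₁ : r ^ (2 * (m + α)) = (r ^ m) ^ 2 * (r ^ α) ^ 2 := by
    rw [mul_comm, Real.rpow_mul hξ0.le, Real.rpow_add hξ0, Real.rpow_natCast, Real.rpow_two,
      mul_pow]
  have hpow₂ : r ^ (2 * (m : ℝ)) = (r ^ m) ^ 2 := by
    rw [mul_comm, Real.rpow_mul hξ0.le, Real.rpow_natCast, Real.rpow_two]
  rw [hpow₁, hpow₂, pow_mul']
  calc (r ^ m) ^ 2 * ‖dtvhat n δ α θ v0 v1 t ξ‖ ^ 2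
      ≤ (r ^ m) ^ 2 * (4 * rexp (-(r ^ (2 * θ) * t / 4)) ^ 2 * (r ^ α * A + B) ^ 2) := by
        gcongr
        calc ‖dtvhat n δ α θ v0 v1 t ξ‖ ^ 2
            ≤ (2 * rexp (-(r ^ (2 * θ) * t / 4)) * (r ^ α * A + B)) ^ 2 := by gcongr
          _ = _ := by ring
    _ ≤ (r ^ m) ^ 2 * (4 * (rexp (1 / 2) * rexp (-((1 + t) * (1 / 2) * r ^ (2 * θ))))
          * (2 * ((r ^ α) ^ 2 * A ^ 2 + B ^ 2))) := by gcongr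
    _ = _ := by ring

lemma setIntegral_sq_dtvhat_le (hn : 1 ≤ n) (hδ : 0 ≤ δ) (hα : 0 ≤ α) (hαθ : α ≤ 2 * θ)
    (hθ : 0 < θ) (hε1 : ε < 1) (m : ℕ) (v0 v1 : EuclideanSpace ℝ (Fin n) → ℂ)
    {t : ℝ} (ht : 0 ≤ t) :
    ∫ ξ in {ξ : EuclideanSpace ℝ (Fin n) | 0 < ‖ξ‖ ∧ ‖ξ‖ < ε},
        ‖ξ‖ ^ (2 * m) * ‖dtvhat n δ α θ v0 v1 t ξ‖ ^ 2
      ≤ 8 * rexp (1 / 2) *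
        ((∫ x, ‖v0 x‖) ^ 2 * ((1 + t) ^ (-(n + 2 * (m + α)) / (2 * θ)) *
            stretchedExpMoment n θ (2 * (m + α)))
          + (∫ x, ‖v1 x‖) ^ 2 * ((1 + t) ^ (-(n + 2 * (m : ℝ)) / (2 * θ)) *
            stretchedExpMoment n θ (2 * m))) := by
  have : Nontrivial (EuclideanSpace ℝ (Fin n)) :=
    Module.nontrivial_of_finrank_pos (R := ℝ) (by simp; omega)
  have hn' : (1 : ℝ) ≤ n := by exact_mod_cast hn
  have hweight (q : ℝ) (hq : 0 ≤ q) : Integrable (fun ξ : EuclideanSpace ℝ (Fin n) =>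
      ‖ξ‖ ^ q * rexp (-((1 + t) * (1 / 2) * ‖ξ‖ ^ (2 * θ)))) :=
    integrable_norm_rpow_mul_exp_neg_mul_norm_rpow _ (by simp; linarith) (by positivity)
      (by positivity)
  have hmeas : MeasurableSet {ξ : EuclideanSpace ℝ (Fin n) | 0 < ‖ξ‖ ∧ ‖ξ‖ < ε} :=
    (measurableSet_lt measurable_const measurable_norm).inter
      (measurableSet_lt measurable_norm measurable_const)
  have hint₁ := (hweight (2 * (m + α)) (by positivity)).const_mul ((∫ x, ‖v0 x‖) ^ 2)
  have hint₂ := (hweight (2 * m) (by positivity)).const_mul ((∫ x, ‖v1 x‖) ^ 2)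
  have hdom := (hint₁.add hint₂).const_mul (8 * rexp (1 / 2))
  simp only [Pi.add_apply] at hdom
  refine (integral_mono_of_nonneg (ae_of_all _ fun ξ => by positivity) hdom.restrict
    (ae_restrict_of_forall_mem hmeas fun ξ hξ =>
      sq_norm_dtvhat_le hδ hαθ hθ.le m v0 v1 ht hξ.1 (hξ.2.trans hε1))).trans ?_
  refine (setIntegral_le_integral hdom (ae_of_all _ fun ξ => by positivity)).trans_eq ?_
  rw [integral_const_mul, integral_add hint₁ hint₂, integral_const_mul, integral_const_mul,
    integral_norm_rpow_mul_exp_neg_mul_mul_norm_rpow _ (by positivity) (by linarith),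
    integral_norm_rpow_mul_exp_neg_mul_mul_norm_rpow _ (by positivity) (by linarith),
    finrank_euclideanSpace_fin, stretchedExpMoment, stretchedExpMoment]

lemma setIntegral_sq_dtvhat_le_sq (hn : 1 ≤ n) (hδ : 0 ≤ δ) (hα : 0 ≤ α) (hαθ : α ≤ 2 * θ)
    (hθ : 0 < θ) (hε1 : ε < 1) (m : ℕ) (v0 v1 : EuclideanSpace ℝ (Fin n) → ℂ)
    {t : ℝ} (ht : 0 ≤ t) :
    ∫ ξ in {ξ : EuclideanSpace ℝ (Fin n) | 0 < ‖ξ‖ ∧ ‖ξ‖ < ε},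
        ‖ξ‖ ^ (2 * m) * ‖dtvhat n δ α θ v0 v1 t ξ‖ ^ 2
      ≤ 8 * rexp (1 / 2) *
        (stretchedExpMoment n θ (2 * (m + α)) + stretchedExpMoment n θ (2 * m)) *
        ((∫ x, ‖v0 x‖) * (1 + t) ^ (-((n : ℝ) / 4 + (m : ℝ) / 2 + α / 2) / θ)
          + (∫ x, ‖v1 x‖) * (1 + t) ^ (-((n : ℝ) / 4 + (m : ℝ) / 2) / θ)) ^ 2 := by
  set A := ∫ x, ‖v0 x‖
  set B := ∫ x, ‖v1 x‖
  set p₁ := (1 + t) ^ (-((n : ℝ) / 4 + (m : ℝ) / 2 + α / 2) / θ)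
  set p₂ := (1 + t) ^ (-((n : ℝ) / 4 + (m : ℝ) / 2) / θ)
  have h₁ : (1 + t) ^ (-(n + 2 * (m + α)) / (2 * θ)) = p₁ ^ 2 :=
    rpow_eq_sq_rpow (by linarith) (by field_simp; ring)
  have h₂ : (1 + t) ^ (-(n + 2 * (m : ℝ)) / (2 * θ)) = p₂ ^ 2 :=
    rpow_eq_sq_rpow (by linarith) (by field_simp; ring)
  set I₁ := stretchedExpMoment n θ (2 * (m + α))
  set I₂ := stretchedExpMoment n θ (2 * m)
  refine (setIntegral_sq_dtvhat_le hn hδ hα hαθ hθ hε1 m v0 v1 ht).trans ?_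
  calc _ = 8 * rexp (1 / 2) * ((A * p₁) ^ 2 * I₁ + (B * p₂) ^ 2 * I₂) := by rw [h₁, h₂]; ring
    _ ≤ 8 * rexp (1 / 2) * ((I₁ + I₂) * (A * p₁ + B * p₂) ^ 2) := by
      gcongr
      exact sq_mul_add_sq_mul_le (by positivity) (by positivity)
        (stretchedExpMoment_nonneg ..) (stretchedExpMoment_nonneg ..)
    _ = _ := by ring

end Estimate

theorem stmt_11_general (n : ℕ) (hn : 1 ≤ n) (δ α θ ε : ℝ)
    (hδ : 0 ≤ δ) (hα : 0 ≤ α) (hθ1 : α / 2 ≤ θ) (hθ : 0 < θ)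
    (hε1 : ε < 1)
    (m : ℕ)
    (v0 v1 : EuclideanSpace ℝ (Fin n) → ℂ) :
    ∃ C : ℝ, 0 < C ∧ ∀ t : ℝ, 0 ≤ t →
      (∫ ξ in {ξ : EuclideanSpace ℝ (Fin n) | 0 < ‖ξ‖ ∧ ‖ξ‖ < ε},
          ‖ξ‖ ^ (2 * m) * ‖dtvhat n δ α θ v0 v1 t ξ‖ ^ 2) ^ (1 / 2 : ℝ)
        ≤ C * ((∫ x, ‖v0 x‖) *
              (1 + t) ^ (-((n : ℝ) / 4 + (m : ℝ) / 2 + α / 2) / θ)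
            + (∫ x, ‖v1 x‖) *
              (1 + t) ^ (-((n : ℝ) / 4 + (m : ℝ) / 2) / θ)) := by
  set K := 8 * rexp (1 / 2) *
    (stretchedExpMoment n θ (2 * (m + α)) + stretchedExpMoment n θ (2 * m))
  have hK : 0 ≤ K := by
    have := stretchedExpMoment_nonneg n θ (2 * (m + α))
    have := stretchedExpMoment_nonneg n θ (2 * m)
    positivity
  refine ⟨√K + 1, by positivity, fun t ht => ?_⟩
  set P := (∫ x, ‖v0 x‖) * (1 + t) ^ (-((n : ℝ) / 4 + (m : ℝ) / 2 + α / 2) / θ)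
    + (∫ x, ‖v1 x‖) * (1 + t) ^ (-((n : ℝ) / 4 + (m : ℝ) / 2) / θ)
  have hsq := setIntegral_sq_dtvhat_le_sq hn hδ hα (by linarith) hθ hε1 m v0 v1 (ε := ε) ht
  calc _ = √(∫ ξ in {ξ : EuclideanSpace ℝ (Fin n) | 0 < ‖ξ‖ ∧ ‖ξ‖ < ε},
          ‖ξ‖ ^ (2 * m) * ‖dtvhat n δ α θ v0 v1 t ξ‖ ^ 2) := (Real.sqrt_eq_rpow _).symm
    _ ≤ √(K * P ^ 2) := Real.sqrt_le_sqrt hsq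
    _ = √K * P := by rw [Real.sqrt_mul hK, Real.sqrt_sq (by positivity)]
    _ ≤ (√K + 1) * P := by gcongr; linarith

theorem stmt_11 (n : ℕ) (hn : 1 ≤ n) (δ α θ ε : ℝ)
    (hδ : 0 ≤ δ) (hα : 0 ≤ α) (hθ1 : α / 2 ≤ θ) (hθ2 : θ ≤ α) (hθ : 0 < θ)
    (hε0 : 0 < ε) (hε1 : ε < 1)
    (m : ℕ)
    (v0 v1 : EuclideanSpace ℝ (Fin n) → ℂ)
    (hv0 : Integrable v0) (hv1 : Integrable v1) :
    ∃ C : ℝ, 0 < C ∧ ∀ t : ℝ, 0 ≤ t →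
      (∫ ξ in {ξ : EuclideanSpace ℝ (Fin n) | 0 < ‖ξ‖ ∧ ‖ξ‖ < ε},
          ‖ξ‖ ^ (2 * m) * ‖dtvhat n δ α θ v0 v1 t ξ‖ ^ 2) ^ (1 / 2 : ℝ)
        ≤ C * ((∫ x, ‖v0 x‖) *
              (1 + t) ^ (-((n : ℝ) / 4 + (m : ℝ) / 2 + α / 2) / θ)
            + (∫ x, ‖v1 x‖) *
              (1 + t) ^ (-((n : ℝ) / 4 + (m : ℝ) / 2) / θ)) :=
  stmt_11_general n hn δ α θ ε hδ hα hθ1 hθ hε1 m v0 v1
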